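/- Let 𝒜 be a central hyperplane arrangement in a finite-dimensional real vector space V with |𝒜| ≥ 3, assume 𝒜 is indecomposable, let m be a natural number, let Φ : Ch(𝒜)^m → Ch(𝒜) be an admissible map, and fix a chamber c₀ ∈ Ch(𝒜). Then there exists i₀ with 1 ≤ i₀ ≤ m such that the map c ↦ Φ(c₀, …, c₀, c, c₀, …, c₀) (with c placed in the i₀-th coordinate and c₀ in all other coordinates) is the identity map of Ch(𝒜). -/

import Mathlib

open Set

section Arrangement

variable {V : Type*} [NormedAddCommGroup V] [NormedSpace ℝ V]

/-- A (linear) hyperplane: the kernel of a nonzero linear functional. -/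
def IsHyperplane (H : Submodule ℝ V) : Prop :=
  ∃ f : V →ₗ[ℝ] ℝ, f ≠ 0 ∧ LinearMap.ker f = H

/-- A central hyperplane arrangement: a finite set of linear hyperplanes. -/
def IsCentralArrangement (𝒜 : Finset (Submodule ℝ V)) : Prop :=
  ∀ H ∈ 𝒜, IsHyperplane H

/-- The complement of the union of the hyperplanes of `𝒜`. -/
def arrComplement (𝒜 : Finset (Submodule ℝ V)) : Set V :=
  {x | ∀ H ∈ 𝒜, x ∉ H}

/-- The set of chambers of `𝒜`: connected components of the complement. -/
def Chambers (𝒜 : Finset (Submodule ℝ V)) : Set (Set V) :=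
  {c | ∃ x ∈ arrComplement 𝒜, c = connectedComponentIn (arrComplement 𝒜) x}

/-- A chamber of `𝒜`. -/
abbrev Chamber (𝒜 : Finset (Submodule ℝ V)) := ↥(Chambers 𝒜)

/-- A chosen point of a chamber. -/
noncomputable def Chamber.pt {𝒜 : Finset (Submodule ℝ V)} (c : Chamber 𝒜) : V :=
  c.2.choose

lemma Chamber.pt_mem {𝒜 : Finset (Submodule ℝ V)} (c : Chamber 𝒜) :
    c.pt ∈ arrComplement 𝒜 := c.2.choose_spec.1

/-- `ε_H` : the chamber of the one-hyperplane arrangement `{H}` containing a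
given chamber of `𝒜` (for `H ∈ 𝒜`). -/
noncomputable def epsC {𝒜 : Finset (Submodule ℝ V)} (H : Submodule ℝ V) (hH : H ∈ 𝒜)
    (c : Chamber 𝒜) : Chamber ({H} : Finset (Submodule ℝ V)) :=
  ⟨connectedComponentIn (arrComplement ({H} : Finset (Submodule ℝ V))) c.pt, by
    refine ⟨c.pt, ?_, rfl⟩
    intro H' hH'
    rw [Finset.mem_singleton] at hH'
    subst hH'
    exact c.pt_mem _ hH⟩

/-- IIA for a map `Ch(𝒜)^m → Ch(𝒜)^l`. -/
def SatisfiesIIA {𝒜 : Finset (Submodule ℝ V)} {m l : ℕ}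
    (Φ : (Fin m → Chamber 𝒜) → (Fin l → Chamber 𝒜)) : Prop :=
  ∀ (H : Submodule ℝ V) (hH : H ∈ 𝒜),
    ∃ φ : (Fin m → Chamber ({H} : Finset (Submodule ℝ V))) →
          (Fin l → Chamber ({H} : Finset (Submodule ℝ V))),
      ∀ c : Fin m → Chamber 𝒜,
        φ (fun i => epsC H hH (c i)) = fun j => epsC H hH (Φ c j)

/-- IIA for a map `Ch(𝒜)^m → Ch(𝒜)`. -/
def SatisfiesIIA1 {𝒜 : Finset (Submodule ℝ V)} {m : ℕ}
    (Φ : (Fin m → Chamber 𝒜) → Chamber 𝒜) : Prop :=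
  ∀ (H : Submodule ℝ V) (hH : H ∈ 𝒜),
    ∃ φ : (Fin m → Chamber ({H} : Finset (Submodule ℝ V))) →
          Chamber ({H} : Finset (Submodule ℝ V)),
      ∀ c : Fin m → Chamber 𝒜,
        φ (fun i => epsC H hH (c i)) = epsC H hH (Φ c)

/-- IIA for a map `Ch(𝒜) → Ch(𝒜)`. -/
def SatisfiesIIAone {𝒜 : Finset (Submodule ℝ V)}
    (f : Chamber 𝒜 → Chamber 𝒜) : Prop :=
  ∀ (H : Submodule ℝ V) (hH : H ∈ 𝒜),
    ∃ φ : Chamber ({H} : Finset (Submodule ℝ V)) → Chamber ({H} : Finset (Submodule ℝ V)),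
      ∀ c : Chamber 𝒜, φ (epsC H hH c) = epsC H hH (f c)

/-- Pareto property. -/
def SatisfiesPAR {𝒜 : Finset (Submodule ℝ V)} {m : ℕ}
    (Φ : (Fin m → Chamber 𝒜) → Chamber 𝒜) : Prop :=
  ∀ c : Chamber 𝒜, Φ (fun _ => c) = c

/-- Admissible map: IIA and PAR. -/
def Admissible {𝒜 : Finset (Submodule ℝ V)} {m : ℕ}
    (Φ : (Fin m → Chamber 𝒜) → Chamber 𝒜) : Prop :=
  SatisfiesIIA1 Φ ∧ SatisfiesPAR Φ

/-- The rank `r(𝒜) = dim V − dim ⋂_{H ∈ 𝒜} H`. -/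
noncomputable def arrRank (𝒜 : Finset (Submodule ℝ V)) : ℕ :=
  Module.finrank ℝ V - Module.finrank ℝ ↥(𝒜.inf id)

/-- Decomposability of a central arrangement. -/
def Decomposable (𝒜 : Finset (Submodule ℝ V)) : Prop :=
  ∃ (n : ℕ) (parts : Fin n → Finset (Submodule ℝ V)),
    2 ≤ n ∧
    (∀ i, (parts i).Nonempty) ∧
    (∀ i j H, H ∈ parts i → H ∈ parts j → i = j) ∧
    (∀ H, H ∈ 𝒜 ↔ ∃ i, H ∈ parts i) ∧
    arrRank 𝒜 = ∑ i, arrRank (parts i)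

/-- A dependent subarrangement: `r(ℬ) < |ℬ|`. -/
def Dependent (ℬ : Finset (Submodule ℝ V)) : Prop := arrRank ℬ < ℬ.card

/-- A circuit: a minimal dependent subarrangement. -/
def IsCircuit (ℬ : Finset (Submodule ℝ V)) : Prop :=
  Dependent ℬ ∧ ∀ ℬ' ⊆ ℬ, Dependent ℬ' → ℬ' = ℬ

/-- The graph `Γ(𝒜)`: vertices are the hyperplanes of `𝒜`, with an edge between two
distinct hyperplanes iff some circuit of `𝒜` contains both. -/
def circuitGraph (𝒜 : Finset (Submodule ℝ V)) : SimpleGraph {H // H ∈ 𝒜} where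
  Adj H H' := H ≠ H' ∧ ∃ ℬ ⊆ 𝒜, IsCircuit ℬ ∧ H.1 ∈ ℬ ∧ H'.1 ∈ ℬ
  symm := by
    constructor
    rintro a b ⟨hne, ℬ, hsub, hcirc, ha, hb⟩
    exact ⟨hne.symm, ℬ, hsub, hcirc, hb, ha⟩
  loopless := by
    constructor
    rintro a ⟨h, -⟩
    exact h rfl

/-- `H` separates a set `T ⊆ Ch(𝒜)^m` if the image of `T` under `(ε_H)^m` has at
least two elements. -/
def SeparationOf {𝒜 : Finset (Submodule ℝ V)} {m : ℕ} (H : Submodule ℝ V) (hH : H ∈ 𝒜)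
    (T : Set (Fin m → Chamber 𝒜)) : Prop :=
  ∃ t₁ ∈ T, ∃ t₂ ∈ T,
    (fun i => epsC H hH (t₁ i)) ≠ (fun i => epsC H hH (t₂ i))

end Arrangement

/-!
For `H ∈ 𝒜` cut out by a linear form `f`, IIA says that the side of `H` containing `Φ c` is a
Boolean function `g_H` of the sides of the `c i`, and PAR makes `g_H` unanimous. A circuit `C`
carries a relation `∑ e_H f_H = 0` with every `e_H ≠ 0`: no chamber lies on the positive side of
all the `e_H f_H` (nor on the negative side of all of them), while every other sign pattern on `C`
is realised by a chamber. So the `g_H`, `H ∈ C`, send not-all-equal columns to a not-all-equal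
output, and since `|C| ≥ 3` an Arrow-type argument shows that the coalitions of voters forcing
`true` form an ultrafilter on the finite set of voters: one voter dictates every `H ∈ C`.
Indecomposability makes the circuit graph connected, because a class of hyperplanes closed under
circuits splits the rank. Each hyperplane has at most one dictator, so a single voter dictates
every hyperplane, and a chamber is determined by its sides.
-/

section NotAllEqual

variable {ι α : Type*}

def NotAllEqualOn (s : Finset ι) (σ : ι → Bool) : Prop :=
  ∃ i ∈ s, ∃ j ∈ s, σ i ≠ σ j

theorem NotAllEqualOn.congr {s : Finset ι} {σ τ : ι → Bool} (h : NotAllEqualOn s σ)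
    (hστ : ∀ i ∈ s, σ i = τ i) : NotAllEqualOn s τ := by
  obtain ⟨i, hi, j, hj, hij⟩ := h
  exact ⟨i, hi, j, hj, by rwa [← hστ i hi, ← hστ j hj]⟩

theorem notAllEqualOn_decide_pos {s : Finset ι} (hs : s.Nonempty) {a : ι → ℝ}
    (hsum : ∑ i ∈ s, a i = 0) (ha : ∀ i ∈ s, a i ≠ 0) :
    NotAllEqualOn s fun i => decide (0 < a i) := by
  obtain ⟨i₀, hi₀⟩ := hs
  by_contra h
  have hall : ∀ i ∈ s, (0 < a i ↔ 0 < a i₀) := fun i hi =>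
    decide_eq_decide.mp (by_contra fun hne => h ⟨i, hi, i₀, hi₀, hne⟩)
  by_cases hpos : 0 < a i₀
  · exact (Finset.sum_pos (fun i hi => (hall i hi).mpr hpos) ⟨i₀, hi₀⟩).ne' hsum
  · refine (Finset.sum_neg (fun i hi => ?_) ⟨i₀, hi₀⟩).ne hsum
    exact lt_of_le_of_ne (not_lt.mp ((hall i hi).not.mpr hpos)) (ha i hi)

/-- `g i` aggregates the opinions `α → Bool` of the voters on the issue `i ∈ s`. -/
structure IsNAEAggregator (s : Finset ι) (g : ι → (α → Bool) → Bool) : Prop where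
  unanimous : ∀ i ∈ s, ∀ b, g i (fun _ => b) = b
  preserves : ∀ σ : α → ι → Bool, (∀ a, NotAllEqualOn s (σ a)) →
    NotAllEqualOn s (fun i => g i fun a => σ a i)

theorem Finset.exists_mem_ne_ne {s : Finset ι} (hs : 3 ≤ s.card) (i j : ι) :
    ∃ k ∈ s, k ≠ i ∧ k ≠ j := by
  classical
  have : 0 < ((s.erase i).erase j).card := by
    have := (s.erase i).pred_card_le_card_erase (a := j)
    have := s.pred_card_le_card_erase (a := i)
    omega
  obtain ⟨k, hk⟩ := Finset.card_pos.mp this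
  simp only [Finset.mem_erase] at hk
  exact ⟨k, hk.2.2, hk.2.1, hk.1⟩

namespace IsNAEAggregator

variable {s : Finset ι} {g : ι → (α → Bool) → Bool}

theorem false_of_three_profile (hg : IsNAEAggregator s g) {i j k : ι}
    (hi : i ∈ s) (hj : j ∈ s) (hk : k ∈ s) (hij : i ≠ j) (hki : k ≠ i) (hkj : k ≠ j)
    {p q r : α → Bool} (hpqr : ∀ a, p a ≠ q a ∨ q a ≠ r a) {β : Bool}
    (hp : g i p = β) (hq : g j q = β) (hr : ∀ l ∈ s, l ≠ i → l ≠ j → g l r = β) : False := by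
  classical
  let σ : α → ι → Bool := fun a l => if l = i then p a else if l = j then q a else r a
  obtain ⟨l, hl, l', hl', hne⟩ := hg.preserves σ fun a => by
    rcases hpqr a with h | h
    · exact ⟨i, hi, j, hj, by simpa [σ, hij.symm] using h⟩
    · exact ⟨j, hj, k, hk, by simpa [σ, hij.symm, hki, hkj] using h⟩
  have hout : ∀ l ∈ s, g l (fun a => σ a l) = β := by
    intro l hl
    by_cases hli : l = i
    · subst hli; simpa [σ] using hp
    by_cases hlj : l = j
    · subst hlj; simpa [σ, hli] using hq
    simpa [σ, hli, hlj] using hr l hl hli hlj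
  exact hne ((hout l hl).trans (hout l' hl').symm)

theorem apply_not_of_ne (hg : IsNAEAggregator s g) (hs : 3 ≤ s.card) {i j : ι} (hi : i ∈ s)
    (hj : j ∈ s) (hij : i ≠ j) (p : α → Bool) : g j (fun a => !p a) = !g i p := by
  obtain ⟨k, hk, hki, hkj⟩ := Finset.exists_mem_ne_ne hs i j
  exact Bool.eq_not.mpr fun h => hg.false_of_three_profile hi hj hk hij hki hkj
    (r := fun _ => g i p) (fun a => by simp) rfl h fun l hl _ _ => hg.unanimous l hl _

theorem apply_eq (hg : IsNAEAggregator s g) (hs : 3 ≤ s.card) {i j : ι} (hi : i ∈ s)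
    (hj : j ∈ s) (p : α → Bool) : g i p = g j p := by
  obtain ⟨k, hk, hki, hkj⟩ := Finset.exists_mem_ne_ne hs i j
  simpa using (hg.apply_not_of_ne hs hi hk hki.symm p).symm.trans
    (hg.apply_not_of_ne hs hj hk hkj.symm p)

theorem apply_not (hg : IsNAEAggregator s g) (hs : 3 ≤ s.card) {i : ι} (hi : i ∈ s)
    (p : α → Bool) : g i (fun a => !p a) = !g i p := by
  obtain ⟨k, hk, hki, -⟩ := Finset.exists_mem_ne_ne hs i i
  rw [hg.apply_eq hs hi hk, hg.apply_not_of_ne hs hi hk hki.symm]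

theorem not_apply_eq_and_apply_eq (hg : IsNAEAggregator s g) (hs : 3 ≤ s.card) {i : ι}
    (hi : i ∈ s) {p q r : α → Bool} (hpqr : ∀ a, p a ≠ q a ∨ q a ≠ r a) :
    ¬ (g i p = g i q ∧ g i q = g i r) := by
  rintro ⟨hpq, hqr⟩
  obtain ⟨i₁, h₁, i₂, h₂, i₃, h₃, h₁₂, h₁₃, h₂₃⟩ := Finset.two_lt_card.mp hs
  refine hg.false_of_three_profile h₁ h₂ h₃ h₁₂ h₁₃.symm h₂₃.symm hpqr
    (hg.apply_eq hs h₁ hi p) ?_ fun l hl _ _ => ?_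
  · rw [hg.apply_eq hs h₂ hi, hpq]
  · rw [hg.apply_eq hs hl hi, hpq, hqr]

theorem apply_and (hg : IsNAEAggregator s g) (hs : 3 ≤ s.card) {i : ι} (hi : i ∈ s)
    {p q : α → Bool} (hp : g i p = true) (hq : g i q = true) :
    g i (fun a => p a && q a) = true := by
  by_contra h
  refine hg.not_apply_eq_and_apply_eq hs hi (r := fun a => !(p a && q a)) (fun a => ?_)
    ⟨hp.trans hq.symm, by rw [hg.apply_not hs hi, Bool.eq_false_iff.mpr h, hq]; rfl⟩
  cases p a <;> cases q a <;> simp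

theorem apply_mono (hg : IsNAEAggregator s g) (hs : 3 ≤ s.card) {i : ι} (hi : i ∈ s)
    {p q : α → Bool} (hpq : ∀ a, p a = true → q a = true) (hp : g i p = true) :
    g i q = true := by
  by_contra h
  have hpq' := hg.apply_and hs hi hp
    (by rw [hg.apply_not hs hi, Bool.eq_false_iff.mpr h]; rfl : g i (fun a => !q a) = true)
  have : (fun a => p a && !q a) = fun _ => false := by
    funext a
    cases hpa : p a
    · rfl
    · simp [hpq a hpa]
  rw [this, hg.unanimous i hi] at hpq'
  exact Bool.false_ne_true hpq'

/-- The coalitions whose agreement decides the issue form an ultrafilter, which is principal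
because there are finitely many voters. -/
theorem exists_dictator [Finite α] (hg : IsNAEAggregator s g) (hs : 3 ≤ s.card) :
    ∃ a₀, ∀ i ∈ s, ∀ p, g i p = p a₀ := by
  classical
  obtain ⟨i, hi⟩ := Finset.card_pos.mp (by omega : 0 < s.card)
  let F : Filter α :=
    { sets := {t | g i (fun a => decide (a ∈ t)) = true}
      univ_sets := by simpa using hg.unanimous i hi true
      sets_of_superset := fun ht hsub =>
        hg.apply_mono hs hi (fun a ha => by simpa using hsub (by simpa using ha)) ht
      inter_sets := fun ht hu => by simpa using hg.apply_and hs hi ht hu }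
  let U := Ultrafilter.ofComplNotMemIff F fun t => by
    simp only [F, ← Filter.mem_sets, Set.mem_ofPred_eq]
    simpa using congrArg (! ·) (hg.apply_not hs hi fun a => decide (a ∈ t))
  obtain ⟨a₀, ha₀⟩ := U.eq_pure_of_finite
  refine ⟨a₀, fun j hj p => ?_⟩
  have hU : {a | p a = true} ∈ U ↔ g i p = true := by
    change {a | p a = true} ∈ F ↔ _
    simp [F, ← Filter.mem_sets]
  rw [ha₀, Ultrafilter.mem_pure] at hU
  rw [hg.apply_eq hs hj hi, Bool.eq_iff_iff, ← hU]
  rfl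

end IsNAEAggregator

end NotAllEqual

open Module

section LinearCircuit

variable (K : Type*) {M ι : Type*} [Field K] [AddCommGroup M] [Module K M] (v : ι → M)

def IsLinearCircuit (C : Finset ι) : Prop :=
  ¬ LinearIndepOn K v (C : Set ι) ∧ ∀ C' ⊆ C, ¬ LinearIndepOn K v (C' : Set ι) → C' = C

variable {K v}

theorem exists_isLinearCircuit_subset {s : Finset ι} (hs : ¬ LinearIndepOn K v (s : Set ι)) :
    ∃ C ⊆ s, IsLinearCircuit K v C := by
  classical
  obtain ⟨C, hC, hmin⟩ :=
    (s.powerset.filter fun C : Finset ι => ¬ LinearIndepOn K v (C : Set ι)).exists_min_image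
      Finset.card ⟨s, by simpa using hs⟩
  simp only [Finset.mem_filter, Finset.mem_powerset] at hC hmin
  exact ⟨C, hC.1, hC.2, fun C' hC' hdep =>
    Finset.eq_of_subset_of_card_le hC' (hmin C' ⟨hC'.trans hC.1, hdep⟩)⟩

namespace IsLinearCircuit

variable {C : Finset ι}

theorem exists_linearCombination_eq_zero (hC : IsLinearCircuit K v C) :
    ∃ e : ι →₀ K, e.support = C ∧ Finsupp.linearCombination K v e = 0 := by
  obtain ⟨e, heC, he, he0⟩ := linearDepOn_iff'.mp hC.1
  refine ⟨e, hC.2 _ (Finset.coe_subset.mp ((Finsupp.mem_supported K e).mp heC)) fun hli => ?_, he⟩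
  exact he0 (linearIndepOn_iff.mp hli e ((Finsupp.mem_supported K e).mpr subset_rfl) he)

theorem linearIndepOn_erase [DecidableEq ι] (hC : IsLinearCircuit K v C) {i : ι} (hi : i ∈ C) :
    LinearIndepOn K v (C.erase i : Set ι) := by
  by_contra h
  exact Finset.notMem_erase i C ((hC.2 _ (C.erase_subset i) h).symm ▸ hi)

theorem nonempty (hC : IsLinearCircuit K v C) : C.Nonempty := by
  rw [Finset.nonempty_iff_ne_empty]
  rintro rfl
  exact hC.1 (by simp)

theorem three_le_card (hC : IsLinearCircuit K v C) (h0 : ∀ i ∈ C, v i ≠ 0)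
    (hpar : ∀ i ∈ C, ∀ j ∈ C, i ≠ j → ∀ c : K, c • v i ≠ v j) : 3 ≤ C.card := by
  classical
  by_contra! hlt
  apply hC.1
  interval_cases h : C.card
  · simp [Finset.card_eq_zero.mp h]
  · obtain ⟨i, rfl⟩ := Finset.card_eq_one.mp h
    simpa using h0 i (by simp)
  · obtain ⟨i, j, hij, rfl⟩ := Finset.card_eq_two.mp h
    rw [Finset.coe_pair, linearIndepOn_pair_iff v hij (h0 i (by simp))]
    exact hpar i (by simp) j (by simp) hij

end IsLinearCircuit

theorem linearCombination_filter_eq_zero {S : Set ι} (p : ι → Prop) [DecidablePred p]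
    (hp : ∀ C : Finset ι, (C : Set ι) ⊆ S → IsLinearCircuit K v C →
      (∀ i ∈ C, p i) ∨ ∀ i ∈ C, ¬ p i)
    (l : ι →₀ K) (hlS : (l.support : Set ι) ⊆ S) (hl : Finsupp.linearCombination K v l = 0) :
    Finsupp.linearCombination K v (l.filter p) = 0 := by
  classical
  induction h : l.support.card using Nat.strong_induction_on generalizing l with
  | _ n ih =>
  rcases eq_or_ne l 0 with rfl | hne
  · rw [Finsupp.filter_zero, map_zero]
  have hdep : ¬ LinearIndepOn K v (l.support : Set ι) := fun hli =>
    hne (linearIndepOn_iff.mp hli l ((Finsupp.mem_supported K l).mpr subset_rfl) hl)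
  obtain ⟨C, hCl, hC⟩ := exists_isLinearCircuit_subset hdep
  obtain ⟨e, heC, he⟩ := hC.exists_linearCombination_eq_zero
  obtain ⟨i, hi⟩ := hC.nonempty
  have hei : e i ≠ 0 := Finsupp.mem_support_iff.mp (heC ▸ hi)
  -- subtracting a multiple of the circuit relation `e` kills the coefficient at `i`
  set l' := l - (l i / e i) • e
  have hl' : l'.support ⊆ l.support.erase i := by
    intro j hj
    rw [Finsupp.mem_support_iff] at hj
    by_cases hji : j = i
    · subst hji; simp [l', hei] at hj
    refine Finset.mem_erase.mpr ⟨hji, Finsupp.mem_support_iff.mpr fun hlj => hj ?_⟩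
    have hej : e j = 0 := Finsupp.notMem_support_iff.mp fun hj' =>
      Finsupp.mem_support_iff.mp (hCl (heC ▸ hj')) hlj
    simp [l', hlj, hej]
  have hcard : l'.support.card < n := h ▸ (Finset.card_le_card hl').trans_lt
    (Finset.card_erase_lt_of_mem (hCl hi))
  have hl'S : (l'.support : Set ι) ⊆ S :=
    (Finset.coe_subset.mpr (hl'.trans (l.support.erase_subset i))).trans hlS
  have ih' := ih _ hcard l' hl'S (by simp [l', hl, he]) rfl
  have he' : Finsupp.linearCombination K v (e.filter p) = 0 := by
    rcases hp C ((Finset.coe_subset.mpr hCl).trans hlS) hC with hpC | hpC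
    · rwa [(Finsupp.filter_eq_self_iff _ _).mpr fun j hj =>
        hpC j (heC ▸ Finsupp.mem_support_iff.mpr hj)]
    · rw [(Finsupp.filter_eq_zero_iff _ _).mpr fun j hj => ?_, map_zero]
      by_contra hej
      exact hpC j (heC ▸ Finsupp.mem_support_iff.mpr hej) hj
  have hsplit : l.filter p = l'.filter p + (l i / e i) • e.filter p := by
    simp [l', Finsupp.filter_sub, Finsupp.filter_smul]
  rw [hsplit, map_add, map_smul, ih', he', smul_zero, add_zero]

theorem exists_forall_apply_eq_of_linearIndependent {V : Type*} [AddCommGroup V] [Module K V]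
    [Finite ι] {f : ι → Dual K V} (hf : LinearIndependent K f) (t : ι → K) :
    ∃ x, ∀ i, f i x = t i := by
  have hspan := span_flip_eq_top_iff_linearIndependent.mpr
    (hf.map' (LinearMap.ltoFun K V K K) (LinearMap.ker_eq_bot.mpr DFunLike.coe_injective))
  have hrange : Set.range (flip (LinearMap.ltoFun K V K K ∘ f)) =
      (LinearMap.range (LinearMap.pi f) : Set (ι → K)) := by
    ext y
    simp [flip, funext_iff]
  rw [hrange, Submodule.span_eq, LinearMap.range_eq_top] at hspan
  obtain ⟨x, hx⟩ := hspan t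
  exact ⟨x, fun i => congrFun hx i⟩

end LinearCircuit

section Hyperplanes

variable {V : Type*} [NormedAddCommGroup V] [NormedSpace ℝ V]

open Classical in
noncomputable def normalForm (H : Submodule ℝ V) : Dual ℝ V :=
  if h : IsHyperplane H then h.choose else 0

namespace IsHyperplane

variable {H : Submodule ℝ V}

theorem ker_normalForm (hH : IsHyperplane H) : LinearMap.ker (normalForm H) = H := by
  rw [normalForm, dif_pos hH]
  exact hH.choose_spec.2

theorem ne_top (hH : IsHyperplane H) : H ≠ ⊤ := by
  obtain ⟨f, hf, rfl⟩ := hH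
  exact fun htop => hf (LinearMap.ker_eq_top.mp htop)

theorem normalForm_ne_zero (hH : IsHyperplane H) : normalForm H ≠ 0 := fun h0 =>
  hH.ne_top (by rw [← hH.ker_normalForm, h0, LinearMap.ker_zero])

theorem smul_normalForm_ne (hH : IsHyperplane H) {H' : Submodule ℝ V} (hH' : IsHyperplane H')
    (hne : H ≠ H') (c : ℝ) : c • normalForm H ≠ normalForm H' := by
  intro h
  have hc : c ≠ 0 := by
    rintro rfl
    exact hH'.normalForm_ne_zero (by rw [← h, zero_smul])
  apply hne
  rw [← hH.ker_normalForm, ← hH'.ker_normalForm, ← h, LinearMap.ker_smul _ _ hc]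

end IsHyperplane

theorem IsCentralArrangement.mono {𝒜 ℬ : Finset (Submodule ℝ V)} (h𝒜 : IsCentralArrangement 𝒜)
    (hℬ : ℬ ⊆ 𝒜) : IsCentralArrangement ℬ :=
  fun H hH => h𝒜 H (hℬ hH)

variable [FiniteDimensional ℝ V] {ℬ : Finset (Submodule ℝ V)}

theorem arrRank_eq_finrank_span (hℬ : IsCentralArrangement ℬ) :
    arrRank ℬ = finrank ℝ (Submodule.span ℝ (normalForm '' (ℬ : Set (Submodule ℝ V)))) := by
  set W := Submodule.span ℝ (normalForm '' (ℬ : Set (Submodule ℝ V)))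
  have hinf : ℬ.inf id = W.dualCoannihilator := by
    ext x
    rw [Submodule.mem_finsetInf, ← SetLike.mem_coe, Submodule.coe_dualCoannihilator_span]
    simp only [id_eq, Set.mem_ofPred_eq, Set.forall_mem_image, Finset.mem_coe]
    exact forall₂_congr fun H hH => by rw [← LinearMap.mem_ker, (hℬ H hH).ker_normalForm]
  have := Subspace.finrank_add_finrank_dualCoannihilator_eq W
  rw [arrRank, hinf]
  omega

theorem dependent_iff_not_linearIndepOn (hℬ : IsCentralArrangement ℬ) :
    Dependent ℬ ↔ ¬ LinearIndepOn ℝ normalForm (ℬ : Set (Submodule ℝ V)) := by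
  rw [Dependent, LinearIndepOn, linearIndependent_iff_card_le_finrank_span, not_le,
    arrRank_eq_finrank_span hℬ, Set.finrank, ← Set.image_eq_range]
  simp

theorem isCircuit_iff_isLinearCircuit (hℬ : IsCentralArrangement ℬ) :
    IsCircuit ℬ ↔ IsLinearCircuit ℝ normalForm ℬ := by
  simp only [IsCircuit, IsLinearCircuit]
  rw [dependent_iff_not_linearIndepOn hℬ]
  exact and_congr_right' (forall₂_congr fun ℬ' hℬ' => by
    rw [dependent_iff_not_linearIndepOn (hℬ.mono hℬ')])

theorem IsCircuit.three_le_card (hℬ : IsCentralArrangement ℬ) (hcirc : IsCircuit ℬ) :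
    3 ≤ ℬ.card :=
  ((isCircuit_iff_isLinearCircuit hℬ).mp hcirc).three_le_card
    (fun H hH => (hℬ H hH).normalForm_ne_zero)
    fun H hH H' hH' hne => (hℬ H hH).smul_normalForm_ne (hℬ H' hH') hne

/-- Circuits do not cross the partition, so linear relations split along it and the spans of the
two parts meet in `0`. -/
theorem arrRank_eq_add_of_isCircuit {𝒜 : Finset (Submodule ℝ V)} (h𝒜 : IsCentralArrangement 𝒜)
    (p : Submodule ℝ V → Prop) [DecidablePred p]
    (hp : ∀ C ⊆ 𝒜, IsCircuit C → (∀ H ∈ C, p H) ∨ ∀ H ∈ C, ¬ p H) :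
    arrRank 𝒜 = arrRank (𝒜.filter p) + arrRank (𝒜.filter (¬ p ·)) := by
  set N : Finset (Submodule ℝ V) → Submodule ℝ (Dual ℝ V) :=
    fun ℬ => Submodule.span ℝ (normalForm '' (ℬ : Set (Submodule ℝ V)))
  have hsup : N 𝒜 = N (𝒜.filter p) ⊔ N (𝒜.filter (¬ p ·)) := by
    simp only [N, ← Submodule.span_union, ← Set.image_union, ← Finset.coe_union,
      Finset.filter_union_filter_not_eq]
  have hinf : N (𝒜.filter p) ⊓ N (𝒜.filter (¬ p ·)) = ⊥ := by
    refine (Submodule.eq_bot_iff _).mpr fun x ⟨hxP, hxQ⟩ => ?_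
    obtain ⟨c, hc, rfl⟩ := (Finsupp.mem_span_image_iff_linearCombination ℝ).mp hxP
    obtain ⟨d, hd, hcd⟩ := (Finsupp.mem_span_image_iff_linearCombination ℝ).mp hxQ
    rw [Finsupp.mem_supported] at hc hd
    have hfilter : (c - d).filter p = c := by
      rw [Finsupp.filter_sub, (Finsupp.filter_eq_self_iff _ _).mpr,
        (Finsupp.filter_eq_zero_iff _ _).mpr, sub_zero]
      · exact fun H hH => by_contra fun hdH =>
          (Finset.mem_filter.mp (hd (Finsupp.mem_support_iff.mpr hdH))).2 hH
      · exact fun H hcH => (Finset.mem_filter.mp (hc (Finsupp.mem_support_iff.mpr hcH))).2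
    rw [← hfilter]
    refine linearCombination_filter_eq_zero p (S := 𝒜) (fun C hC hcirc => ?_) _ ?_
      (by rw [map_sub, hcd, sub_self])
    · have hC' := Finset.coe_subset.mp hC
      exact hp C hC' ((isCircuit_iff_isLinearCircuit (h𝒜.mono hC')).mpr hcirc)
    · intro H hH
      rcases Finset.mem_union.mp (Finsupp.support_sub hH) with h | h
      · exact Finset.filter_subset _ _ (hc h)
      · exact Finset.filter_subset _ _ (hd h)
  have := Submodule.finrank_sup_add_finrank_inf_eq (N (𝒜.filter p)) (N (𝒜.filter (¬ p ·)))
  rw [← hsup, hinf, finrank_bot] at this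
  rw [arrRank_eq_finrank_span h𝒜, arrRank_eq_finrank_span (h𝒜.mono (Finset.filter_subset _ _)),
    arrRank_eq_finrank_span (h𝒜.mono (Finset.filter_subset _ _))]
  omega

end Hyperplanes

section CircuitGraph

variable {V : Type*} [NormedAddCommGroup V] [NormedSpace ℝ V] {𝒜 : Finset (Submodule ℝ V)}

theorem decomposable_of_arrRank_eq_add (p : Submodule ℝ V → Prop) [DecidablePred p]
    (hp : ∃ H ∈ 𝒜, p H) (hnp : ∃ H ∈ 𝒜, ¬ p H)
    (hrank : arrRank 𝒜 = arrRank (𝒜.filter p) + arrRank (𝒜.filter (¬ p ·))) :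
    Decomposable 𝒜 := by
  refine ⟨2, ![𝒜.filter p, 𝒜.filter (¬ p ·)], le_rfl, fun i => ?_, fun i j H hi hj => ?_,
    fun H => ?_, by simpa using hrank⟩
  · fin_cases i
    · obtain ⟨H, hH, hpH⟩ := hp
      exact ⟨H, by simpa using ⟨hH, hpH⟩⟩
    · obtain ⟨H, hH, hpH⟩ := hnp
      exact ⟨H, by simpa using ⟨hH, hpH⟩⟩
  · fin_cases i <;> fin_cases j <;> simp_all
  · constructor
    · intro hH
      by_cases hpH : p H
      · exact ⟨0, by simpa using ⟨hH, hpH⟩⟩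
      · exact ⟨1, by simpa using ⟨hH, hpH⟩⟩
    · rintro ⟨i, hi⟩
      fin_cases i <;> exact Finset.mem_of_mem_filter _ hi

theorem circuitGraph_reachable_of_mem_circuit {C : Finset (Submodule ℝ V)} (hC : C ⊆ 𝒜)
    (hcirc : IsCircuit C) {H H' : {H // H ∈ 𝒜}} (hH : H.1 ∈ C) (hH' : H'.1 ∈ C) :
    (circuitGraph 𝒜).Reachable H H' := by
  rcases eq_or_ne H H' with rfl | hne
  · rfl
  · exact SimpleGraph.Adj.reachable ⟨hne, C, hC, hcirc, hH, hH'⟩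

theorem circuitGraph_preconnected [FiniteDimensional ℝ V] (h𝒜 : IsCentralArrangement 𝒜)
    (hind : ¬ Decomposable 𝒜) : (circuitGraph 𝒜).Preconnected := by
  classical
  intro H₀ H₁
  by_contra hH₁
  let p : Submodule ℝ V → Prop := fun H => ∃ h : H ∈ 𝒜, (circuitGraph 𝒜).Reachable H₀ ⟨H, h⟩
  refine hind (decomposable_of_arrRank_eq_add p ⟨H₀, H₀.2, H₀.2, SimpleGraph.Reachable.refl _⟩
    ⟨H₁, H₁.2, fun ⟨_, h⟩ => hH₁ h⟩ (arrRank_eq_add_of_isCircuit h𝒜 p fun C hC hcirc => ?_))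
  by_cases h : ∃ H ∈ C, p H
  · obtain ⟨H, hHC, hH, hreach⟩ := h
    exact Or.inl fun H' hH'C => ⟨hC hH'C, hreach.trans
      (circuitGraph_reachable_of_mem_circuit hC hcirc (H := ⟨H, hH⟩) hHC hH'C)⟩
  · exact Or.inr fun H hH hpH => h ⟨H, hH, hpH⟩

end CircuitGraph

theorem SimpleGraph.Reachable.of_adj_imp {W : Type*} {G : SimpleGraph W} {P : W → Prop}
    (hP : ∀ u w, G.Adj u w → P u → P w) {u w : W} (huw : G.Reachable u w) (hu : P u) : P w := by
  rw [SimpleGraph.reachable_iff_reflTransGen] at huw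
  induction huw with
  | refl => exact hu
  | tail _ hadj ih => exact hP _ _ hadj ih

section Complement

variable {V : Type*} [NormedAddCommGroup V] [NormedSpace ℝ V] {𝒜 : Finset (Submodule ℝ V)}

theorem arrComplement_eq_biInter (𝒜 : Finset (Submodule ℝ V)) :
    arrComplement 𝒜 = ⋂ H ∈ 𝒜, ((H : Set V)ᶜ) := by
  ext x
  simp [arrComplement]

theorem connectedComponentIn_eq_of_pos_iff {x y : V} (hx : x ∈ arrComplement 𝒜)
    (hy : y ∈ arrComplement 𝒜)
    (h : ∀ H ∈ 𝒜, ∃ f : Dual ℝ V, LinearMap.ker f = H ∧ (0 < f x ↔ 0 < f y)) :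
    connectedComponentIn (arrComplement 𝒜) x = connectedComponentIn (arrComplement 𝒜) y := by
  have hseg : segment ℝ x y ⊆ arrComplement 𝒜 := by
    intro z hz H hH hzH
    obtain ⟨f, hf, hxy⟩ := h H hH
    have hf0 : ∀ w ∉ H, f w ≠ 0 := fun w hw h0 => hw (hf ▸ LinearMap.mem_ker.mpr h0)
    have hfz : f z = 0 := LinearMap.mem_ker.mp (hf ▸ hzH)
    rcases (hf0 x (hx H hH)).lt_or_gt with hfx | hfx
    · have hfy : f y < 0 :=
        lt_of_le_of_ne (not_lt.mp (hxy.not.mp hfx.not_gt)) (hf0 y (hy H hH))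
      exact ((convex_halfSpace_lt f.isLinear 0).segment_subset hfx hfy hz).ne hfz
    · exact ((convex_halfSpace_gt f.isLinear 0).segment_subset hfx (hxy.mp hfx) hz).ne' hfz
  exact connectedComponentIn_eq ((convex_segment x y).isPreconnected.subset_connectedComponentIn
    (left_mem_segment ℝ x y) hseg (right_mem_segment ℝ x y))

variable [FiniteDimensional ℝ V]

theorem dense_arrComplement (h𝒜 : IsCentralArrangement 𝒜) : Dense (arrComplement 𝒜) := by
  rw [arrComplement_eq_biInter]
  refine dense_biInter_of_isOpen (S := (𝒜 : Set (Submodule ℝ V)))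
    (fun H _ => (Submodule.closed_of_finiteDimensional H).isOpen_compl) 𝒜.countable_toSet
    fun H hH => interior_eq_empty_iff_dense_compl.mp ?_
  by_contra hne
  exact (h𝒜 H hH).ne_top (H.eq_top_of_nonempty_interior' (Set.nonempty_iff_ne_empty.mpr hne))

theorem pos_iff_pos_of_mem_connectedComponentIn {H : Submodule ℝ V} (hH : H ∈ 𝒜)
    {f : Dual ℝ V} (hf : LinearMap.ker f = H) {x y : V}
    (hy : y ∈ connectedComponentIn (arrComplement 𝒜) x) : 0 < f x ↔ 0 < f y := by
  set K := connectedComponentIn (arrComplement 𝒜) x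
  have hx : x ∈ K := mem_connectedComponentIn (connectedComponentIn_nonempty_iff.mp ⟨y, hy⟩)
  have hivt : ∀ {a b}, a ∈ K → b ∈ K → Set.Icc (f a) (f b) ⊆ f '' K := fun ha hb =>
    isPreconnected_connectedComponentIn.intermediate_value ha hb
      f.continuous_of_finiteDimensional.continuousOn
  have hne : ∀ z ∈ K, f z ≠ 0 := fun z hz h0 =>
    connectedComponentIn_subset _ _ hz H hH (hf ▸ LinearMap.mem_ker.mpr h0)
  constructor
  · intro hfx
    by_contra hfy
    obtain ⟨z, hz, hz0⟩ := hivt hy hx ⟨not_lt.mp hfy, hfx.le⟩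
    exact hne z hz hz0
  · intro hfy
    by_contra hfx
    obtain ⟨z, hz, hz0⟩ := hivt hx hy ⟨not_lt.mp hfx, hfy.le⟩
    exact hne z hz hz0

theorem exists_mem_arrComplement_forall_pos_iff (h𝒜 : IsCentralArrangement 𝒜) {ι : Type*}
    (C : Finset ι) (f : ι → Dual ℝ V) {x : V} (hx : ∀ i ∈ C, f i x ≠ 0) :
    ∃ z ∈ arrComplement 𝒜, ∀ i ∈ C, (0 < f i z ↔ 0 < f i x) := by
  let U := ⋂ i ∈ C, {y | 0 < f i x * f i y}
  have hU : IsOpen U := isOpen_biInter_finset fun i _ =>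
    isOpen_lt continuous_const (continuous_const.mul (f i).continuous_of_finiteDimensional)
  have hxU : x ∈ U := Set.mem_iInter₂.mpr fun i hi => mul_self_pos.mpr (hx i hi)
  obtain ⟨z, hzU, hz⟩ := (dense_arrComplement h𝒜).inter_open_nonempty U hU ⟨x, hxU⟩
  exact ⟨z, hz, fun i hi => (pos_iff_pos_of_mul_pos (Set.mem_iInter₂.mp hzU i hi)).symm⟩

end Complement

namespace Chamber

variable {V : Type*} [NormedAddCommGroup V] [NormedSpace ℝ V] {𝒜 : Finset (Submodule ℝ V)}

theorem val_eq (c : Chamber 𝒜) : (c : Set V) = connectedComponentIn (arrComplement 𝒜) c.pt :=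
  c.2.choose_spec.2

def ofPoint {x : V} (hx : x ∈ arrComplement 𝒜) : Chamber 𝒜 :=
  ⟨connectedComponentIn (arrComplement 𝒜) x, x, hx, rfl⟩

noncomputable def side (f : Dual ℝ V) (c : Chamber 𝒜) : Bool :=
  decide (0 < f c.pt)

variable [FiniteDimensional ℝ V] {H : Submodule ℝ V} {f : Dual ℝ V}

theorem side_ofPoint (hH : H ∈ 𝒜) (hf : LinearMap.ker f = H) {x : V}
    (hx : x ∈ arrComplement 𝒜) : side f (ofPoint hx) = decide (0 < f x) := by
  have hpt : (ofPoint hx).pt ∈ connectedComponentIn (arrComplement 𝒜) x := by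
    have := mem_connectedComponentIn (ofPoint hx).pt_mem
    rwa [← val_eq] at this
  rw [side, decide_eq_decide]
  exact (pos_iff_pos_of_mem_connectedComponentIn hH hf hpt).symm

theorem epsC_eq_epsC_iff (hH : H ∈ 𝒜) (hf : LinearMap.ker f = H) (c c' : Chamber 𝒜) :
    epsC H hH c = epsC H hH c' ↔ side f c = side f c' := by
  have hmem : ∀ c : Chamber 𝒜, c.pt ∈ arrComplement ({H} : Finset (Submodule ℝ V)) :=
    fun c H' hH' => Finset.mem_singleton.mp hH' ▸ c.pt_mem H hH
  rw [Subtype.ext_iff, side, side, decide_eq_decide]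
  change connectedComponentIn _ c.pt = connectedComponentIn _ c'.pt ↔ _
  constructor
  · intro h
    have := mem_connectedComponentIn (hmem c')
    rw [← h] at this
    exact pos_iff_pos_of_mem_connectedComponentIn (Finset.mem_singleton_self H) hf this
  · intro h
    exact connectedComponentIn_eq_of_pos_iff (hmem c) (hmem c') fun H' hH' =>
      ⟨f, hf.trans (Finset.mem_singleton.mp hH').symm, h⟩

theorem eq_iff_forall_epsC_eq (h𝒜 : IsCentralArrangement 𝒜) (c c' : Chamber 𝒜) :
    c = c' ↔ ∀ H (hH : H ∈ 𝒜), epsC H hH c = epsC H hH c' := by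
  refine ⟨fun h _ _ => h ▸ rfl, fun h => Subtype.ext ?_⟩
  rw [val_eq, val_eq]
  refine connectedComponentIn_eq_of_pos_iff c.pt_mem c'.pt_mem fun H hH =>
    ⟨normalForm H, (h𝒜 H hH).ker_normalForm, ?_⟩
  simpa [side] using (epsC_eq_epsC_iff hH (h𝒜 H hH).ker_normalForm c c').mp (h H hH)

theorem exists_side_eq (h𝒜 : IsCentralArrangement 𝒜) (hH : H ∈ 𝒜) (hf : LinearMap.ker f = H)
    (b : Bool) : ∃ c : Chamber 𝒜, side f c = b := by
  obtain ⟨x, hx⟩ := (dense_arrComplement h𝒜).nonempty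
  have hx' : -x ∈ arrComplement 𝒜 := fun H' hH' hxH' =>
    hx H' hH' (by simpa using H'.neg_mem hxH')
  have hfx : f x ≠ 0 := fun h0 => hx H hH (hf ▸ LinearMap.mem_ker.mpr h0)
  rcases hfx.lt_or_gt with hneg | hpos <;> cases b
  · exact ⟨ofPoint hx, by simp [side_ofPoint hH hf, hneg.le]⟩
  · exact ⟨ofPoint hx', by simp [side_ofPoint hH hf, hneg]⟩
  · exact ⟨ofPoint hx', by simp [side_ofPoint hH hf, hpos.le]⟩
  · exact ⟨ofPoint hx, by simp [side_ofPoint hH hf, hpos]⟩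

end Chamber

theorem sum_ite_neg_one_pos {ι : Type*} {s : Finset ι} {σ : ι → Bool} {i₁ : ι} (hi₁ : i₁ ∈ s)
    (h₁ : σ i₁ = true) {N : ℝ} (hN : (s.card : ℝ) ≤ N) :
    0 < ∑ i ∈ s, if σ i then N else -1 := by
  have hle : N + 1 ≤ ∑ i ∈ s, ((if σ i then N else -1) + 1) := by
    refine le_of_eq_of_le (by simp [h₁]) (Finset.single_le_sum (fun i _ => ?_) hi₁)
    split_ifs
    · linarith [s.card.cast_nonneg (α := ℝ)]
    · norm_num
  rw [Finset.sum_add_distrib, Finset.sum_const, nsmul_one] at hle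
  linarith

section SignPatterns

variable {V : Type*} [NormedAddCommGroup V] [NormedSpace ℝ V]

theorem exists_forall_sign_eq_of_sum_eq_zero {ι : Type*} [DecidableEq ι] {C : Finset ι}
    {v : ι → Dual ℝ V} {e : ι → ℝ} (he : ∀ i ∈ C, e i ≠ 0) (hsum : ∑ i ∈ C, e i • v i = 0)
    (hli : ∀ i ∈ C, LinearIndepOn ℝ v (C.erase i : Set ι)) {σ : ι → Bool}
    (hσ : NotAllEqualOn C σ) :
    ∃ x, ∀ i ∈ C, e i * v i x ≠ 0 ∧ decide (0 < e i * v i x) = σ i := by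
  obtain ⟨i₀, hi₀, i₁, hi₁, h₀, h₁⟩ : ∃ i₀ ∈ C, ∃ i₁ ∈ C, σ i₀ = false ∧ σ i₁ = true := by
    obtain ⟨i, hi, j, hj, hij⟩ := hσ
    cases hσi : σ i
    · exact ⟨i, hi, j, hj, hσi, by simpa [hσi] using hij.symm⟩
    · exact ⟨j, hj, i, hi, by simpa [hσi] using hij.symm, hσi⟩
  -- off `i₀` the values are prescribed freely; the relation then forces the value at `i₀`,
  -- which is negative because the single value `C.card` outweighs all the values `-1`
  let t : ι → ℝ := fun i => if σ i then (C.card : ℝ) else -1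
  obtain ⟨x, hx⟩ := exists_forall_apply_eq_of_linearIndependent (hli i₀ hi₀)
    fun i => t i / e i
  have hx' : ∀ i ∈ C.erase i₀, e i * v i x = t i := fun i hi => by
    rw [hx ⟨i, hi⟩, mul_div_cancel₀ _ (he i (Finset.mem_of_mem_erase hi))]
  have hpos : 0 < ∑ i ∈ C.erase i₀, e i * v i x := by
    rw [Finset.sum_congr rfl hx']
    exact sum_ite_neg_one_pos (Finset.mem_erase.mpr ⟨fun h => by simp_all, hi₁⟩) h₁
      (by exact_mod_cast Finset.card_erase_le)
  have hi₀x : e i₀ * v i₀ x = -∑ i ∈ C.erase i₀, e i * v i x := by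
    have := congrArg (fun g : Dual ℝ V => g x) hsum
    simp only [← Finset.add_sum_erase C _ hi₀, LinearMap.add_apply, LinearMap.sum_apply,
      LinearMap.smul_apply, smul_eq_mul, LinearMap.zero_apply] at this
    linarith
  refine ⟨x, fun i hi => ?_⟩
  by_cases hii₀ : i = i₀
  · subst hii₀
    rw [hi₀x, h₀]
    exact ⟨by linarith, by simp [hpos.le]⟩
  · rw [hx' i (Finset.mem_erase.mpr ⟨hii₀, hi⟩)]
    have : (0 : ℝ) < C.card := by exact_mod_cast Finset.card_pos.mpr ⟨i, hi⟩
    cases hσi : σ i <;> simp [t, hσi, this, this.ne']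

variable [FiniteDimensional ℝ V] {𝒜 : Finset (Submodule ℝ V)}

theorem exists_chamber_side_eq (h𝒜 : IsCentralArrangement 𝒜) {C : Finset (Submodule ℝ V)}
    (hC : C ⊆ 𝒜) {e : Submodule ℝ V → ℝ} (he : ∀ H ∈ C, e H ≠ 0)
    (hsum : ∑ H ∈ C, e H • normalForm H = 0)
    (hli : ∀ H ∈ C, LinearIndepOn ℝ normalForm (C.erase H : Set (Submodule ℝ V)))
    {σ : Submodule ℝ V → Bool} (hσ : NotAllEqualOn C σ) :
    ∃ c : Chamber 𝒜, ∀ H ∈ C, c.side (e H • normalForm H) = σ H := by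
  classical
  obtain ⟨x, hx⟩ := exists_forall_sign_eq_of_sum_eq_zero he hsum hli hσ
  obtain ⟨z, hz, hzx⟩ := exists_mem_arrComplement_forall_pos_iff h𝒜 C
    (fun H => e H • normalForm H) (x := x) fun H hH => by simpa using (hx H hH).1
  refine ⟨Chamber.ofPoint hz, fun H hH => ?_⟩
  rw [Chamber.side_ofPoint (hC hH) (by rw [LinearMap.ker_smul _ _ (he H hH),
    (h𝒜 H (hC hH)).ker_normalForm]), decide_eq_decide.mpr (hzx H hH)]
  simpa using (hx H hH).2

end SignPatterns

section Dictator

variable {V : Type*} [NormedAddCommGroup V] [NormedSpace ℝ V] [FiniteDimensional ℝ V]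
  {𝒜 : Finset (Submodule ℝ V)} {m : ℕ} {Φ : (Fin m → Chamber 𝒜) → Chamber 𝒜}

theorem Admissible.exists_sideAggregator (hΦ : Admissible Φ) (h𝒜 : IsCentralArrangement 𝒜)
    {H : Submodule ℝ V} (hH : H ∈ 𝒜) {f : Dual ℝ V} (hf : LinearMap.ker f = H) :
    ∃ g : (Fin m → Bool) → Bool, (∀ c, g (fun i => (c i).side f) = (Φ c).side f) ∧
      ∀ b, g (fun _ => b) = b := by
  obtain ⟨φ, hφ⟩ := hΦ.1 H hH
  have hfac : Function.FactorsThrough (fun c => (Φ c).side f) (fun c i => (c i).side f) := by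
    intro c c' hcc'
    have : (fun i => epsC H hH (c i)) = fun i => epsC H hH (c' i) :=
      funext fun i => (Chamber.epsC_eq_epsC_iff hH hf _ _).mpr (congrFun hcc' i)
    exact (Chamber.epsC_eq_epsC_iff hH hf _ _).mp (by rw [← hφ, ← hφ, this])
  refine ⟨Function.extend (fun c i => (c i).side f) (fun c => (Φ c).side f) fun _ => false,
    hfac.extend_apply _, fun b => ?_⟩
  obtain ⟨c, hc⟩ := Chamber.exists_side_eq h𝒜 hH hf b
  simpa only [hc, hΦ.2 c] using hfac.extend_apply (fun _ => false) (fun _ => c)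

variable (Φ) in
def IsLocalDictator (H : {H // H ∈ 𝒜}) (i : Fin m) : Prop :=
  ∀ c, epsC H.1 H.2 (Φ c) = epsC H.1 H.2 (c i)

theorem IsLocalDictator.unique (h𝒜 : IsCentralArrangement 𝒜) {H : {H // H ∈ 𝒜}} {i j : Fin m}
    (hi : IsLocalDictator Φ H i) (hj : IsLocalDictator Φ H j) : i = j := by
  have hf := (h𝒜 H.1 H.2).ker_normalForm
  obtain ⟨c₁, hc₁⟩ := Chamber.exists_side_eq h𝒜 H.2 hf true
  obtain ⟨c₂, hc₂⟩ := Chamber.exists_side_eq h𝒜 H.2 hf false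
  by_contra hij
  have := (hi (Function.update (fun _ => c₁) j c₂)).symm.trans (hj _)
  rw [Function.update_of_ne hij, Function.update_self, Chamber.epsC_eq_epsC_iff H.2 hf, hc₁,
    hc₂] at this
  exact Bool.noConfusion this

theorem Admissible.exists_isLocalDictator_of_isCircuit (hΦ : Admissible Φ)
    (h𝒜 : IsCentralArrangement 𝒜) {C : Finset (Submodule ℝ V)} (hC : C ⊆ 𝒜)
    (hcirc : IsCircuit C) : ∃ i, ∀ H : {H // H ∈ 𝒜}, H.1 ∈ C → IsLocalDictator Φ H i := by
  classical
  have hlin := (isCircuit_iff_isLinearCircuit (h𝒜.mono hC)).mp hcirc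
  obtain ⟨e, heC, he⟩ := hlin.exists_linearCombination_eq_zero
  have he0 : ∀ H ∈ C, e H ≠ 0 := fun H hH => Finsupp.mem_support_iff.mp (heC ▸ hH)
  have hsum : ∑ H ∈ C, e H • normalForm H = 0 := by
    rwa [Finsupp.linearCombination_apply, Finsupp.sum, heC] at he
  let f : Submodule ℝ V → Dual ℝ V := fun H => e H • normalForm H
  have hf : ∀ H ∈ C, LinearMap.ker (f H) = H := fun H hH => by
    rw [LinearMap.ker_smul _ _ (he0 H hH), (h𝒜 H (hC hH)).ker_normalForm]
  choose! g hg hgu using fun H (hH : H ∈ C) => hΦ.exists_sideAggregator h𝒜 (hC hH) (hf H hH)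
  have hagg : IsNAEAggregator C g := by
    refine ⟨hgu, fun σ hσ => ?_⟩
    choose c hc using fun i => exists_chamber_side_eq h𝒜 hC he0 hsum
      (fun H hH => hlin.linearIndepOn_erase hH) (hσ i)
    refine (notAllEqualOn_decide_pos hlin.nonempty (a := fun H => f H (Φ c).pt) ?_
      fun H hH h0 => (Φ c).pt_mem H (hC hH) (hf H hH ▸ LinearMap.mem_ker.mpr h0)).congr
      fun H hH => ?_
    · simpa [f] using congrArg (fun φ : Dual ℝ V => φ (Φ c).pt) hsum
    · rw [← Chamber.side, ← hg H hH c]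
      exact congrArg _ (funext fun i => hc i H hH)
  obtain ⟨i, hi⟩ := hagg.exists_dictator (IsCircuit.three_le_card (h𝒜.mono hC) hcirc)
  refine ⟨i, fun H hH c => (Chamber.epsC_eq_epsC_iff H.2 (hf H hH) _ _).mpr ?_⟩
  rw [← hg H hH c, hi H hH]

end Dictator

/-- For an admissible map `Φ` on an indecomposable central arrangement with
`|𝒜| ≥ 3` and a fixed chamber `c₀`, there is an index `i₀` such that
`c ↦ Φ(c₀, …, c₀, c, c₀, …, c₀)` (with `c` in the `i₀`-th slot) is the identity
of `Ch(𝒜)`. -/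
theorem exists_index_diag_section_id
    {V : Type*} [NormedAddCommGroup V] [NormedSpace ℝ V] [FiniteDimensional ℝ V]
    (𝒜 : Finset (Submodule ℝ V)) (h𝒜 : IsCentralArrangement 𝒜)
    (hcard : 3 ≤ 𝒜.card) (hind : ¬ Decomposable 𝒜)
    (m : ℕ) (Φ : (Fin m → Chamber 𝒜) → Chamber 𝒜) (hΦ : Admissible Φ)
    (c₀ : Chamber 𝒜) :
    ∃ i₀ : Fin m, ∀ c : Chamber 𝒜,
      Φ (Function.update (fun _ => c₀) i₀ c) = c := by
  have hconn := circuitGraph_preconnected h𝒜 hind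
  have : Nontrivial {H // H ∈ 𝒜} :=
    Fintype.one_lt_card_iff_nontrivial.mp (by rw [Fintype.card_coe]; omega)
  obtain ⟨H₀⟩ := (inferInstance : Nonempty {H // H ∈ 𝒜})
  obtain ⟨-, -, C, hC, hcirc, hH₀C, -⟩ := hconn.exists_adj_of_nontrivial H₀
  obtain ⟨i₀, hi₀⟩ := hΦ.exists_isLocalDictator_of_isCircuit h𝒜 hC hcirc
  have hstep : ∀ u w, (circuitGraph 𝒜).Adj u w →
      IsLocalDictator Φ u i₀ → IsLocalDictator Φ w i₀ := by
    rintro u w ⟨-, C, hC, hcirc, huC, hwC⟩ hu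
    obtain ⟨i, hi⟩ := hΦ.exists_isLocalDictator_of_isCircuit h𝒜 hC hcirc
    exact hu.unique h𝒜 (hi u huC) ▸ hi w hwC
  have hdict : ∀ H, IsLocalDictator Φ H i₀ := fun H =>
    (hconn H₀ H).of_adj_imp hstep (hi₀ H₀ hH₀C)
  refine ⟨i₀, fun c => (Chamber.eq_iff_forall_epsC_eq h𝒜 _ _).mpr fun H hH => ?_⟩
  rw [hdict ⟨H, hH⟩, Function.update_self]
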